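/- Let q be a prime power, b a positive integer, f ∈ F_q[x] a monic irreducible polynomial of degree d, and A = ⊕_{i=1}^t C_f ∈ F_q^{n×n} with n = td. Then for any U ∈ F_q^{b×n} and V ∈ F_q^{n×b}, with U_i ∈ F_q^{b×d} and V_i ∈ F_q^{d×b} the blocks of U and V conforming to the diagonal blocks of A, minpoly(U·Ā·V) = f if the sequence Σ_{i=1}^t U_i·C̄_f·V_i is nonzero and minpoly(U·Ā·V) = 1 otherwise; hence P(A) equals the fraction of pairs (U, V) for which Σ_{i=1}^t U_i·C̄_f·V_i ≠ 0. -/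

import Mathlib

open Matrix Polynomial

/-- `p` annihilates the matrix sequence `S`, i.e. `p(S) = 0`:
for every `k`, `∑ i, (coeff p i) • S (i + k) = 0`. -/
def AnnPoly {F : Type} [Field F] {α β : Type} (p : Polynomial F)
    (S : ℕ → Matrix α β F) : Prop :=
  ∀ k : ℕ, (p.sum fun i a => a • S (i + k)) = 0

open scoped Classical in
/-- The minimal generating polynomial of a matrix sequence: the unique monic
polynomial annihilating `S` that divides every annihilator of `S`
(`0` if no such polynomial exists). -/
noncomputable def seqMinpoly {F : Type} [Field F] {α β : Type}
    (S : ℕ → Matrix α β F) : Polynomial F :=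
  if h : ∃ p : Polynomial F, p.Monic ∧ AnnPoly p S ∧ ∀ g : Polynomial F, AnnPoly g S → p ∣ g
  then h.choose else 0

/-- `pmp F b A` : the fraction of pairs `(U, V)` for which the projected sequence
`(U * A^k * V)_k` has the same minimal polynomial as the sequence `(A^k)_k`. -/
noncomputable def pmp (F : Type) [Field F] [Fintype F] (b : ℕ)
    {ι : Type} [Fintype ι] [DecidableEq ι] (A : Matrix ι ι F) : ℚ :=
  (Nat.card {UV : Matrix (Fin b) ι F × Matrix ι (Fin b) F //
      seqMinpoly (fun k => UV.1 * A ^ k * UV.2) = seqMinpoly (fun k => A ^ k)} : ℚ) /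
  (Nat.card (Matrix (Fin b) ι F × Matrix ι (Fin b) F) : ℚ)

/-- The companion matrix of a monic polynomial `f` of degree `d`:
ones on the subdiagonal, last column `(-f_0, …, -f_{d-1})ᵀ`. -/
def companion {F : Type} [Field F] (d : ℕ) (f : Polynomial F) :
    Matrix (Fin d) (Fin d) F :=
  Matrix.of fun i j => (if (i : ℕ) = (j : ℕ) + 1 then 1 else 0) +
    (if (j : ℕ) = d - 1 then -f.coeff (i : ℕ) else 0)

/-- The Jordan block `J_{f^e}` of `f^e` (`f` of degree `d`): `e` diagonal blocks `C_f`
and identity blocks on the first block subdiagonal. -/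
def jordanBlock {F : Type} [Field F] (d e : ℕ) (f : Polynomial F) :
    Matrix (Fin e × Fin d) (Fin e × Fin d) F :=
  Matrix.of fun p q =>
    if p.1 = q.1 then companion d f p.2 q.2
    else if (p.1 : ℕ) = (q.1 : ℕ) + 1 then (if p.2 = q.2 then 1 else 0) else 0

/-- `blockSum C U V` is the sequence `k ↦ ∑ᵢ Uᵢ · Cᵏ · Vᵢ`, where `Uᵢ, Vᵢ` are the
blocks of `U, V` conforming to the diagonal blocks of `⊕_{i=1}^t C`. -/
def blockSum {F : Type} [Field F] {b d t : ℕ} (C : Matrix (Fin d) (Fin d) F)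
    (U : Matrix (Fin b) (Fin d × Fin t) F) (V : Matrix (Fin d × Fin t) (Fin b) F)
    (k : ℕ) : Matrix (Fin b) (Fin b) F :=
  ∑ i : Fin t,
    (Matrix.of fun r c => U r (c, i)) * C ^ k * (Matrix.of fun c r => V (c, i) r)

/-! Shifting a matrix sequence makes it a module over `F[X]`, and the polynomials annihilating
a sequence form an ideal. The companion matrix `C_f` is the matrix of multiplication by the root
in `F[X]/(f)`, so `f(C_f) = 0`, hence `f(A) = 0` and `f` annihilates every projected sequence
`U·Ā·V`. As `f` is irreducible, `(f)` is maximal, so the annihilator ideal of a nonzero sequence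
annihilated by `f` is exactly `(f)`, while a zero sequence is annihilated by `1`. Finally
`U·Ā·V` is, blockwise, the sequence `∑ᵢ Uᵢ·C̄_f·Vᵢ`. -/

theorem Polynomial.Monic.X_pow_natDegree_modByMonic {R : Type*} [CommRing R] {f : R[X]}
    (hf : f.Monic) : X ^ f.natDegree %ₘ f = X ^ f.natDegree - f := by
  nontriviality R
  rw [modByMonic_eq_of_dvd_sub hf (p₂ := X ^ f.natDegree - f) (by simp),
    (modByMonic_eq_self_iff hf).2]
  exact degree_sub_lt_right (by rw [degree_X_pow, degree_eq_natDegree hf.ne_zero]) hf.ne_zero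
    (by simp [hf.leadingCoeff])

section Companion

variable {F : Type} [Field F] {f : F[X]}

theorem companion_eq_leftMulMatrix (hf : f.Monic) :
    companion f.natDegree f =
      Algebra.leftMulMatrix (AdjoinRoot.powerBasisAux' hf) (AdjoinRoot.root f) := by
  ext i j
  rw [Algebra.leftMulMatrix_eq_repr_mul, AdjoinRoot.powerBasisAux'_repr_apply_to_fun]
  rw [show AdjoinRoot.powerBasisAux' hf j = AdjoinRoot.root f ^ (j : ℕ) from
      (AdjoinRoot.powerBasis' hf).basis_eq_pow j, ← pow_succ', ← AdjoinRoot.mk_X, ← map_pow,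
    AdjoinRoot.modByMonicHom_mk]
  have hi := i.isLt
  rcases (show (j : ℕ) + 1 ≤ f.natDegree from j.isLt).lt_or_eq with hj | hj
  · rw [(modByMonic_eq_self_iff hf).2 (by rwa [degree_X_pow, degree_eq_natDegree hf.ne_zero,
      Nat.cast_lt]), coeff_X_pow]
    simp [companion, show (j : ℕ) ≠ f.natDegree - 1 by omega]
  · rw [hj, hf.X_pow_natDegree_modByMonic, coeff_sub, coeff_X_pow]
    simp [companion, show (j : ℕ) = f.natDegree - 1 by omega,
      show (i : ℕ) ≠ f.natDegree - 1 + 1 by omega, hi.ne]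

theorem aeval_companion_self (hf : f.Monic) : aeval (companion f.natDegree f) f = 0 := by
  rw [companion_eq_leftMulMatrix hf, aeval_algHom_apply, AdjoinRoot.aeval_eq, AdjoinRoot.mk_self,
    map_zero]

end Companion

section BlockDiagonal

variable {R : Type*} [CommSemiring R] {m o : Type*} [Fintype m] [DecidableEq m] [Fintype o]
  [DecidableEq o]

def Matrix.blockDiagonalAlgHom : (o → Matrix m m R) →ₐ[R] Matrix (m × o) (m × o) R where
  __ := blockDiagonalRingHom m o R
  commutes' r := by
    simp [algebraMap_eq_diagonal, Pi.algebraMap_def, blockDiagonal_diagonal]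

theorem Matrix.aeval_blockDiagonal (M : o → Matrix m m R) (p : R[X]) :
    aeval (blockDiagonal M) p = blockDiagonal fun i => aeval (M i) p := by
  change aeval (blockDiagonalAlgHom M) p = _
  rw [aeval_algHom_apply, aeval_pi_apply]
  rfl

end BlockDiagonal

section Sequences

variable {F : Type} [Field F] {α β γ δ : Type}

def seqShift (F : Type) [Field F] (α β : Type) : Module.End F (ℕ → Matrix α β F) :=
  LinearMap.funLeft F (Matrix α β F) (· + 1)

theorem seqShift_pow_apply (i : ℕ) (S : ℕ → Matrix α β F) (k : ℕ) :
    (seqShift F α β ^ i) S k = S (k + i) := by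
  induction i generalizing S with
  | zero => rfl
  | succ i ih => rw [pow_succ, Module.End.mul_apply, ih]; rfl

theorem aeval_seqShift_apply (p : F[X]) (S : ℕ → Matrix α β F) (k : ℕ) :
    aeval (seqShift F α β) p S k = p.sum fun i a => a • S (i + k) := by
  simp only [aeval_def, eval₂_eq_sum, Polynomial.sum_def, LinearMap.sum_apply, Finset.sum_apply,
    Module.End.mul_apply, Module.algebraMap_end_apply, Pi.smul_apply, seqShift_pow_apply,
    add_comm k]

theorem annPoly_iff_aeval_seqShift {p : F[X]} {S : ℕ → Matrix α β F} :
    AnnPoly p S ↔ aeval (seqShift F α β) p S = 0 := by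
  simp only [AnnPoly, funext_iff, aeval_seqShift_apply, Pi.zero_apply]

noncomputable def seqAnnIdeal (S : ℕ → Matrix α β F) : Ideal F[X] :=
  Ideal.torsionOf F[X] (Module.AEval' (seqShift F α β)) (Module.AEval'.of _ S)

theorem mem_seqAnnIdeal {p : F[X]} {S : ℕ → Matrix α β F} : p ∈ seqAnnIdeal S ↔ AnnPoly p S := by
  rw [seqAnnIdeal, Ideal.mem_torsionOf_iff, ← Module.AEval.of_aeval_smul,
    annPoly_iff_aeval_seqShift]
  exact LinearEquiv.map_eq_zero_iff _

theorem annPoly_one_iff {S : ℕ → Matrix α β F} : AnnPoly 1 S ↔ S = 0 := by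
  rw [annPoly_iff_aeval_seqShift, map_one, Module.End.one_apply]

theorem AnnPoly.map {p : F[X]} {S : ℕ → Matrix α β F} (L : Matrix α β F →ₗ[F] Matrix γ δ F)
    (h : AnnPoly p S) : AnnPoly p (fun k => L (S k)) := by
  intro k
  have hk := h k
  rw [Polynomial.sum_def] at hk ⊢
  simp only [← map_smul, ← map_sum, hk, map_zero]

theorem annPoly_pow [Fintype α] [DecidableEq α] {p : F[X]} {A : Matrix α α F}
    (h : aeval A p = 0) : AnnPoly p (fun k => A ^ k) := by
  intro k
  have hk : (p.sum fun i a => a • A ^ (i + k)) = aeval A p * A ^ k := by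
    simp only [aeval_def, eval₂_eq_sum, Polynomial.sum_def, Finset.sum_mul, pow_add,
      Algebra.smul_def, mul_assoc]
  rw [hk, h, zero_mul]

theorem seqMinpoly_eq_of_forall_dvd {S : ℕ → Matrix α β F} {m : F[X]} (hm : m.Monic)
    (hmS : AnnPoly m S) (hdvd : ∀ g, AnnPoly g S → m ∣ g) : seqMinpoly S = m := by
  have h : ∃ p : F[X], p.Monic ∧ AnnPoly p S ∧ ∀ g, AnnPoly g S → p ∣ g := ⟨m, hm, hmS, hdvd⟩
  obtain ⟨hp, hpS, hpdvd⟩ := h.choose_spec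
  rw [seqMinpoly, dif_pos h]
  exact eq_of_monic_of_associated hp hm (associated_of_dvd_dvd (hpdvd m hmS) (hdvd _ hpS))

theorem seqMinpoly_zero : seqMinpoly (0 : ℕ → Matrix α β F) = 1 :=
  seqMinpoly_eq_of_forall_dvd monic_one (annPoly_one_iff.2 rfl) fun g _ => one_dvd g

theorem seqMinpoly_eq_of_irreducible {S : ℕ → Matrix α β F} {f : F[X]} (hf : f.Monic)
    (hirr : Irreducible f) (hfS : AnnPoly f S) (hS : S ≠ 0) : seqMinpoly S = f := by
  have hspan : Ideal.span {f} = seqAnnIdeal S :=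
    (PrincipalIdealRing.isMaximal_of_irreducible hirr).eq_of_le
      (fun h => hS (annPoly_one_iff.1 (mem_seqAnnIdeal.1 (h ▸ Submodule.mem_top))))
      (Ideal.span_le.2 (Set.singleton_subset_iff.2 (mem_seqAnnIdeal.2 hfS)))
  refine seqMinpoly_eq_of_forall_dvd hf hfS fun g hg => ?_
  rw [← Ideal.mem_span_singleton, hspan, mem_seqAnnIdeal]
  exact hg

theorem seqMinpoly_mul_pow_mul {ι κ κ' : Type} [Fintype ι] [DecidableEq ι] {f : F[X]}
    (hf : f.Monic) (hirr : Irreducible f) {A : Matrix ι ι F} (hA : aeval A f = 0)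
    {U : Matrix κ ι F} {V : Matrix ι κ' F} (hUV : (fun k => U * A ^ k * V) ≠ 0) :
    seqMinpoly (fun k => U * A ^ k * V) = f :=
  seqMinpoly_eq_of_irreducible hf hirr
    ((annPoly_pow hA).map ((mulRightLinearMap _ F V).comp (mulLeftLinearMap _ F U))) hUV

end Sequences

theorem mul_blockDiagonal_pow_mul {F : Type} [Field F] {b d t : ℕ}
    (C : Matrix (Fin d) (Fin d) F) (U : Matrix (Fin b) (Fin d × Fin t) F)
    (V : Matrix (Fin d × Fin t) (Fin b) F) (k : ℕ) :
    U * blockDiagonal (fun _ : Fin t => C) ^ k * V = blockSum C U V k := by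
  rw [← blockDiagonal_pow]
  ext r s
  simp only [blockSum, mul_apply, blockDiagonal_apply, Matrix.sum_apply, of_apply,
    Fintype.sum_prod_type, Finset.sum_mul, mul_ite, mul_zero, Finset.sum_ite_eq', Finset.mem_univ,
    if_true, Pi.pow_apply]
  rw [Finset.sum_comm]

theorem stmt8_general (F : Type) [Field F] [Fintype F] (b t : ℕ) (ht : 0 < t)
    (f : Polynomial F) (hmonic : f.Monic) (hirr : Irreducible f)
    (d : ℕ) (hd : d = f.natDegree)
    (A : Matrix (Fin d × Fin t) (Fin d × Fin t) F)
    (hA : A = Matrix.blockDiagonal fun _ : Fin t => companion d f) :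
    (∀ (U : Matrix (Fin b) (Fin d × Fin t) F) (V : Matrix (Fin d × Fin t) (Fin b) F),
      (blockSum (companion d f) U V ≠ 0 →
        seqMinpoly (fun k => U * A ^ k * V) = f) ∧
      (blockSum (companion d f) U V = 0 →
        seqMinpoly (fun k => U * A ^ k * V) = 1)) ∧
    pmp F b A =
      (Nat.card {UV : Matrix (Fin b) (Fin d × Fin t) F × Matrix (Fin d × Fin t) (Fin b) F //
          blockSum (companion d f) UV.1 UV.2 ≠ 0} : ℚ) /
      (Nat.card (Matrix (Fin b) (Fin d × Fin t) F × Matrix (Fin d × Fin t) (Fin b) F) : ℚ) := by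
  subst hd
  set C := companion f.natDegree f
  have hfA : aeval A f = 0 := by
    rw [hA, aeval_blockDiagonal, aeval_companion_self hmonic]
    exact blockDiagonal_zero
  have hproj (U : Matrix (Fin b) (Fin f.natDegree × Fin t) F) V :
      (fun k => U * A ^ k * V) = blockSum C U V :=
    funext (hA ▸ mul_blockDiagonal_pow_mul C U V)
  have hminpoly (U : Matrix (Fin b) (Fin f.natDegree × Fin t) F) V :
      (blockSum C U V ≠ 0 → seqMinpoly (fun k => U * A ^ k * V) = f) ∧
      (blockSum C U V = 0 → seqMinpoly (fun k => U * A ^ k * V) = 1) :=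
    ⟨fun h => seqMinpoly_mul_pow_mul hmonic hirr hfA (hproj U V ▸ h),
      fun h => by rw [hproj, h, seqMinpoly_zero]⟩
  have : NeZero f.natDegree := ⟨hirr.natDegree_pos.ne'⟩
  have : NeZero t := ⟨ht.ne'⟩
  have hpow : seqMinpoly (fun k => A ^ k) = f :=
    seqMinpoly_eq_of_irreducible hmonic hirr (annPoly_pow hfA) fun h => one_ne_zero (congrFun h 0)
  refine ⟨hminpoly, ?_⟩
  rw [pmp, hpow]
  congr 2
  refine Nat.card_congr (Equiv.subtypeEquivRight fun UV => ⟨fun h h0 => ?_, (hminpoly _ _).1⟩)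
  exact hirr.ne_one (h.symm.trans ((hminpoly _ _).2 h0))

/-- For `A = ⊕_{i=1}^t C_f` with `f` monic irreducible: for all `U, V`, the projected
sequence `U·Ā·V` has minpoly `f` when `∑ᵢ Uᵢ·C̄_f·Vᵢ ≠ 0` and minpoly `1` otherwise;
hence `P(A)` is the fraction of pairs with `∑ᵢ Uᵢ·C̄_f·Vᵢ ≠ 0`. -/
theorem stmt8 (F : Type) [Field F] [Fintype F] (b t : ℕ) (hb : 0 < b) (ht : 0 < t)
    (f : Polynomial F) (hmonic : f.Monic) (hirr : Irreducible f)
    (d : ℕ) (hd : d = f.natDegree)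
    (A : Matrix (Fin d × Fin t) (Fin d × Fin t) F)
    (hA : A = Matrix.blockDiagonal fun _ : Fin t => companion d f) :
    (∀ (U : Matrix (Fin b) (Fin d × Fin t) F) (V : Matrix (Fin d × Fin t) (Fin b) F),
      (blockSum (companion d f) U V ≠ 0 →
        seqMinpoly (fun k => U * A ^ k * V) = f) ∧
      (blockSum (companion d f) U V = 0 →
        seqMinpoly (fun k => U * A ^ k * V) = 1)) ∧
    pmp F b A =
      (Nat.card {UV : Matrix (Fin b) (Fin d × Fin t) F × Matrix (Fin d × Fin t) (Fin b) F //
          blockSum (companion d f) UV.1 UV.2 ≠ 0} : ℚ) /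
      (Nat.card (Matrix (Fin b) (Fin d × Fin t) F × Matrix (Fin d × Fin t) (Fin b) F) : ℚ) :=
  stmt8_general F b t ht f hmonic hirr d hd A hA
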